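/- arXiv:2510.11723 — 3 statements merged into one kernel-verified Lean document; each statement's English description precedes it below -/
import Mathlib

section
/- Let p > q ≥ 1 be coprime integers. The language L_{p/q} is prefix-closed and right-extendable: if u·v ∈ L_{p/q} for digit words u, v, then u ∈ L_{p/q}; and for every u ∈ L_{p/q} there exists a digit a ∈ {0,…,p−1} such that the concatenation u·a belongs to L_{p/q}. -/
/-- The valuation in base `p/q` of a digit word (most significant digit first):
`val_{p/q}(a_k ⋯ a_0) = (1/q) ∑ a_i (p/q)^i`, with `val(ε) = 0`. -/
def ratVal (p q : ℕ) (w : List ℕ) : ℚ :=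
  w.foldl (fun x a => (p : ℚ) / q * x + (a : ℚ) / q) 0

/-- Membership in the language `L_{p/q}`: all letters lie in `{0,…,p-1}`, the valuation
is a nonnegative integer, and the word is empty or has nonzero leading digit. -/
def InLang (p q : ℕ) (w : List ℕ) : Prop :=
  (∀ a ∈ w, a < p) ∧ (∃ n : ℕ, ratVal p q w = n) ∧ w.head? ≠ some 0

lemma ratVal_concat (p q : ℕ) (u : List ℕ) (a : ℕ) :
    ratVal p q (u ++ [a]) = (p : ℚ) / q * ratVal p q u + (a : ℚ) / q := by
  simp [ratVal, List.foldl_append]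

lemma ratVal_num (p q : ℕ) (hq : 0 < q) (u : List ℕ) :
    ∃ N : ℕ, ratVal p q u * (q : ℚ) ^ u.length = N := by
  have hq' : (q : ℚ) ≠ 0 := by positivity
  induction u using List.reverseRecOn with
  | nil => exact ⟨0, by simp [ratVal]⟩
  | append_singleton u a ih =>
    obtain ⟨N, hN⟩ := ih
    refine ⟨p * N + a * q ^ u.length, ?_⟩
    rw [ratVal_concat]
    push_cast
    field_simp
    rw [List.length_append, List.length_singleton]
    linear_combination ((p : ℚ) * (q : ℚ)) * hN

lemma step_back (p q : ℕ) (hq : 0 < q) (hpq : q < p) (hco : Nat.Coprime p q)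
    (u : List ℕ) (a n : ℕ) (h : ratVal p q (u ++ [a]) = n) :
    ∃ m : ℕ, ratVal p q u = m := by
  have hq' : (q : ℚ) ≠ 0 := by positivity
  have hp' : 0 < p := lt_trans hq hpq
  obtain ⟨N, hN⟩ := ratVal_num p q hq u
  set L := u.length with hL
  rw [ratVal_concat] at h
  -- key equation in ℚ : p * N = q^L * (q*n - a)
  have key : (p : ℚ) * N = (q : ℚ) ^ L * ((q : ℚ) * n - a) := by
    have := hN
    field_simp at h
    linear_combination (q:ℚ)^L * h - (p:ℚ) * hN
  -- q*n ≥ a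
  have hle : a ≤ q * n := by
    by_contra hlt
    push_neg at hlt
    have h1 : (q : ℚ) * n - a < 0 := by
      have : (q * n : ℚ) < a := by exact_mod_cast hlt
      linarith
    have h2 : (q : ℚ) ^ L * ((q : ℚ) * n - a) < 0 := by
      apply mul_neg_of_pos_of_neg _ h1
      positivity
    have h3 : (0:ℚ) ≤ (p : ℚ) * N := by positivity
    linarith [key ▸ h3]
  have keyN : p * N = q ^ L * (q * n - a) := by
    have : ((p * N : ℕ) : ℚ) = ((q ^ L * (q * n - a) : ℕ) : ℚ) := by
      push_cast [Nat.cast_sub hle]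
      linear_combination key
    exact_mod_cast this
  have hdvd : p ∣ q * n - a := by
    have : p ∣ q ^ L * (q * n - a) := ⟨N, keyN.symm⟩
    exact (Nat.Coprime.pow_right L hco).dvd_of_dvd_mul_left this
  obtain ⟨t, ht⟩ := hdvd
  have hNt : N = q ^ L * t := by
    have : p * N = p * (q ^ L * t) := by rw [keyN, ht]; ring
    exact Nat.eq_of_mul_eq_mul_left hp' this
  refine ⟨t, ?_⟩
  have hqL : (q : ℚ) ^ L ≠ 0 := by positivity
  have : ratVal p q u * (q:ℚ)^L = (t : ℚ) * (q:ℚ)^L := by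
    rw [hN, hNt]; push_cast; ring
  exact mul_right_cancel₀ hqL this

lemma drop_last (p q : ℕ) (hq : 0 < q) (hpq : q < p) (hco : Nat.Coprime p q)
    (w : List ℕ) (a : ℕ) (h : InLang p q (w ++ [a])) : InLang p q w := by
  obtain ⟨hd, ⟨n, hn⟩, hh⟩ := h
  refine ⟨fun b hb => hd b (List.mem_append_left _ hb), step_back p q hq hpq hco w a n hn, ?_⟩
  cases w with
  | nil => simp
  | cons b t => simpa using hh

/-- For coprime `p > q ≥ 1`, the language `L_{p/q}` is prefix-closed
(`u ++ v ∈ L_{p/q}` implies `u ∈ L_{p/q}`) and right-extendable (every `u ∈ L_{p/q}`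
admits a digit `a ∈ {0,…,p-1}` with `u ++ [a] ∈ L_{p/q}`). -/
theorem stmt1 (p q : ℕ) (hq : 1 ≤ q) (hpq : q < p) (hco : Nat.Coprime p q) :
    (∀ u v : List ℕ, InLang p q (u ++ v) → InLang p q u) ∧
    (∀ u : List ℕ, InLang p q u → ∃ a : ℕ, a < p ∧ InLang p q (u ++ [a])) := by
  have hq' : (q : ℚ) ≠ 0 := by positivity
  constructor
  · intro u v
    induction v using List.reverseRecOn with
    | nil => intro h; simpa using h
    | append_singleton v a ih =>
      intro h
      rw [← List.append_assoc] at h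
      exact ih (drop_last p q hq hpq hco (u ++ v) a h)
  · intro u hu
    obtain ⟨hd, ⟨n, hn⟩, hh⟩ := hu
    cases u with
    | nil =>
      refine ⟨q, hpq, ?_, ⟨1, ?_⟩, ?_⟩
      · intro b hb; simp at hb; omega
      · rw [ratVal_concat]
        simp [ratVal]
        omega
      · simp; omega
    | cons b t =>
      set r := p * n % q with hr
      refine ⟨if r = 0 then 0 else q - r, ?_, ?_, ⟨(p * n + (if r = 0 then 0 else q - r)) / q, ?_⟩, ?_⟩
      · have : r < q := Nat.mod_lt _ hq; split <;> omega
      · intro c hc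
        rcases List.mem_append.1 hc with hc | hc
        · exact hd c hc
        · simp at hc; subst hc; have : r < q := Nat.mod_lt _ hq; split <;> omega
      · have hdvd : q ∣ p * n + (if r = 0 then 0 else q - r) := by
          have h1 := Nat.div_add_mod (p * n) q
          have h2 : r < q := Nat.mod_lt _ hq
          rcases Nat.eq_zero_or_pos r with h0 | h0
          · simp [h0]; omega
          · rw [if_neg (by omega)]
            exact ⟨p * n / q + 1, by rw [Nat.mul_add, Nat.mul_one]; omega⟩
        rw [ratVal_concat, hn]
        rw [Nat.cast_div hdvd hq']
        push_cast
        ring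
      · simpa using hh
end

section
/- Let p > q ≥ 1 be coprime integers. For every u ∈ L_{p/q} and every natural number l, there exists a word v of length l over the alphabet {0,…,p−1} such that the concatenation u·v belongs to L_{p/q}. -/
lemma ratVal_append_singleton (p q : ℕ) (w : List ℕ) (a : ℕ) :
    ratVal p q (w ++ [a]) = (p : ℚ) / q * ratVal p q w + (a : ℚ) / q := by
  simp [ratVal, List.foldl_append]

lemma step (p q : ℕ) (hq : 1 ≤ q) (hpq : q < p) (w : List ℕ) (n : ℕ)
    (h : ratVal p q w = n) :
    ∃ a m : ℕ, a < q ∧ ratVal p q (w ++ [a]) = m := by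
  set a := (q - p * n % q) % q with ha
  have haq : a < q := Nat.mod_lt _ (by omega)
  have hdvd : q ∣ p * n + a := by
    have h2 : (p * n + a) % q = 0 := by
      rw [Nat.add_mod, Nat.mod_eq_of_lt haq]
      rcases Nat.eq_zero_or_pos (p * n % q) with h0 | h0
      · simp [ha, h0, Nat.mod_self]
      · have hr : p * n % q < q := Nat.mod_lt _ (by omega)
        have haeq : a = q - p * n % q := by
          rw [ha]; exact Nat.mod_eq_of_lt (by omega)
        rw [haeq, show p * n % q + (q - p * n % q) = q by omega, Nat.mod_self]
    exact Nat.dvd_of_mod_eq_zero h2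
  refine ⟨a, (p * n + a) / q, haq, ?_⟩
  have hq0 : (q : ℚ) ≠ 0 := by positivity
  rw [ratVal_append_singleton, h]
  rw [Nat.cast_div hdvd (by exact_mod_cast hq0)]
  push_cast
  field_simp

lemma chain (p q : ℕ) (hq : 1 ≤ q) (hpq : q < p) (l : ℕ) :
    ∀ (w : List ℕ) (n : ℕ), ratVal p q w = n →
    ∃ v : List ℕ, v.length = l ∧ (∀ a ∈ v, a < p) ∧ ∃ m : ℕ, ratVal p q (w ++ v) = m := by
  induction l with
  | zero => intro w n h; exact ⟨[], rfl, by simp, n, by simpa using h⟩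
  | succ l ih =>
    intro w n h
    obtain ⟨a, m, haq, hval⟩ := step p q hq hpq w n h
    obtain ⟨v, hlen, hdig, m', hval'⟩ := ih (w ++ [a]) m hval
    refine ⟨a :: v, by simp [hlen], ?_, m', ?_⟩
    · intro b hb
      rcases List.mem_cons.1 hb with rfl | hb
      · omega
      · exact hdig b hb
    · rw [show w ++ a :: v = (w ++ [a]) ++ v by simp]
      exact hval'

/-- For coprime `p > q ≥ 1`, every `u ∈ L_{p/q}` and every length `l` admit a word `v`
of length `l` over `{0,…,p-1}` such that `u ++ v ∈ L_{p/q}`. -/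
theorem stmt2 (p q : ℕ) (hq : 1 ≤ q) (hpq : q < p) (hco : Nat.Coprime p q)
    (u : List ℕ) (hu : InLang p q u) (l : ℕ) :
    ∃ v : List ℕ, v.length = l ∧ (∀ a ∈ v, a < p) ∧ InLang p q (u ++ v) := by
  obtain ⟨hdig, ⟨n, hval⟩, hhead⟩ := hu
  match u, l with
  | [], 0 => exact ⟨[], rfl, by simp, by simp, ⟨n, hval⟩, hhead⟩
  | [], l + 1 =>
    have hq0 : (q : ℚ) ≠ 0 := by positivity
    have h1 : ratVal p q [q] = (1 : ℕ) := by
      simp [ratVal]; omega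
    obtain ⟨v, hlen, hvd, m, hval'⟩ := chain p q hq hpq l [q] 1 h1
    refine ⟨q :: v, by simp [hlen], ?_, ?_, ⟨m, by simpa using hval'⟩, by simp; omega⟩
    · intro b hb; rcases List.mem_cons.1 hb with rfl | hb
      · omega
      · exact hvd b hb
    · intro b hb; simp at hb; rcases hb with rfl | hb
      · omega
      · exact hvd b hb
  | a :: u', l =>
    obtain ⟨v, hlen, hvd, m, hval'⟩ := chain p q hq hpq l (a :: u') n hval
    refine ⟨v, hlen, hvd, ?_, ⟨m, hval'⟩, by simpa using hhead⟩
    intro b hb; simp at hb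
    rcases hb with hb | hb | hb
    · exact hdig b (by simp [hb])
    · exact hdig b (by simp [hb])
    · exact hvd b hb
end

section
/- Let p > q ≥ 1 be coprime integers and let u ∈ L_{p/q} be nonempty. For every natural number l, val_{p/q}(u·wmin_{p/q}(u,l)) = T_{p/q}^l(val_{p/q}(u)), i.e., the sequence of minimal numbers with seed u is obtained by iterating the map T_{p/q}(x) = ⌈px/q⌉ starting from val_{p/q}(u). -/
/-- `v` is the lexicographically least word of length `l` over `{0,…,p-1}`
such that `u ++ v ∈ L_{p/q}`. -/
def IsWmin (p q : ℕ) (u : List ℕ) (l : ℕ) (v : List ℕ) : Prop :=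
  v.length = l ∧ InLang p q (u ++ v) ∧
    ∀ v' : List ℕ, v'.length = l → InLang p q (u ++ v') →
      ¬ List.Lex (· < · : ℕ → ℕ → Prop) v' v

/-- `v` is the lexicographically greatest word of length `l` over `{0,…,p-1}`
such that `u ++ v ∈ L_{p/q}`. -/
def IsWmax (p q : ℕ) (u : List ℕ) (l : ℕ) (v : List ℕ) : Prop :=
  v.length = l ∧ InLang p q (u ++ v) ∧
    ∀ v' : List ℕ, v'.length = l → InLang p q (u ++ v') →
      ¬ List.Lex (· < · : ℕ → ℕ → Prop) v v'

/-- The map `T_{p/q} : x ↦ ⌈px/q⌉` on the integers. -/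
def Tmap (p q : ℕ) (x : ℤ) : ℤ := ⌈((p : ℚ) * (x : ℚ)) / (q : ℚ)⌉

lemma ratVal_eq_map_foldl (p q : ℕ) (w : List ℕ) :
    ratVal p q w = (w.map (Nat.cast : ℕ → ℚ)).foldl (fun x a => (p : ℚ) / q * x + a / q) 0 := by
  show (w >>= fun a => pure ((a:ℚ))).foldl _ 0 = _
  rw [bind_pure_comp]
  simp [List.map_eq_map]

lemma foldl_gen (p q : ℕ) (x : ℚ) (w : List ℚ) :
    w.foldl (fun x a => (p : ℚ) / q * x + a / q) x
      = ((p:ℚ)/q)^w.length * x + w.foldl (fun x a => (p : ℚ) / q * x + a / q) 0 := by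
  induction w generalizing x with
  | nil => simp
  | cons b t ih =>
    rw [List.foldl_cons, List.foldl_cons, ih, ih ((p:ℚ)/q*0 + b/q), List.length_cons]
    ring

lemma ratVal_cons (p q : ℕ) (b : ℕ) (t : List ℕ) :
    ratVal p q (b :: t) = ((p:ℚ)/q)^t.length * ((b:ℚ)/q) + ratVal p q t := by
  rw [ratVal_eq_map_foldl, ratVal_eq_map_foldl, List.map_cons, List.foldl_cons, foldl_gen,
    List.length_map]
  ring

lemma ratVal_append (p q : ℕ) (u v : List ℕ) :
    ratVal p q (u ++ v) = ((p:ℚ)/q)^v.length * ratVal p q u + ratVal p q v := by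
  rw [ratVal_eq_map_foldl, ratVal_eq_map_foldl, ratVal_eq_map_foldl, List.map_append,
    List.foldl_append, foldl_gen, List.length_map]

def intValAux (p q : ℕ) : List ℕ → ℤ
  | [] => 0
  | b :: t => (p:ℤ)^t.length * b + q * intValAux p q t

lemma intValAux_cast (p q : ℕ) (hq : 0 < q) (v : List ℕ) :
    (intValAux p q v : ℚ) = (q:ℚ)^v.length * ratVal p q v := by
  have hq' : (q:ℚ) ≠ 0 := by positivity
  induction v with
  | nil => simp [intValAux, ratVal]
  | cons b t ih =>
    rw [ratVal_cons, List.length_cons]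
    show ((((p:ℤ)^t.length * b + q * intValAux p q t) : ℤ) : ℚ) = _
    push_cast [ih]
    rw [div_pow]
    field_simp
    ring

lemma forced_digit (p q : ℕ) (hq : 0 < q) (hco : Nat.Coprime p q)
    (u : List ℕ) (n : ℤ) (hn : (n:ℚ) = ratVal p q u)
    (b : ℕ) (t : List ℕ) (m : ℤ) (hm : (m:ℚ) = ratVal p q (u ++ b :: t)) :
    (q:ℤ) ∣ (p:ℤ) * n + b := by
  have hq' : (q:ℚ) ≠ 0 := by positivity
  set L := t.length with hL
  have key : (q:ℤ)^(L+1) * m = (p:ℤ)^(L+1) * n + ((p:ℤ)^L * b + q * intValAux p q t) := by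
    have h2 : ((q:ℚ))^(L+1) * (m:ℚ)
        = (p:ℚ)^(L+1) * (n:ℚ) + ((intValAux p q (b :: t) : ℤ) : ℚ) := by
      rw [intValAux_cast p q hq, hm, ratVal_append, ← hn, List.length_cons, div_pow]
      field_simp
      ring
    have h3 : (intValAux p q (b :: t) : ℤ) = (p:ℤ)^L * b + q * intValAux p q t := rfl
    rw [h3] at h2
    exact_mod_cast h2
  have h1 : (q:ℤ) ∣ (p:ℤ)^L * ((p:ℤ)*n + b) :=
    ⟨(q:ℤ)^L * m - intValAux p q t, by linear_combination -key⟩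
  have hcop : IsCoprime (q:ℤ) ((p:ℤ)^L) :=
    (Nat.isCoprime_iff_coprime.mpr hco.symm).pow_right
  exact hcop.dvd_of_dvd_mul_left h1

lemma step_lemma (p q : ℕ) (hq : 1 ≤ q) (hpq : q < p)
    (u : List ℕ) (hu : InLang p q u) (hne : u ≠ [])
    (n : ℤ) (hn : (n : ℚ) = ratVal p q u) :
    ∃ r : ℕ, r < q ∧ (q:ℤ) ∣ (p:ℤ) * n + r ∧ InLang p q (u ++ [r]) ∧
      ((Tmap p q n : ℤ) : ℚ) = ratVal p q (u ++ [r]) := by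
  have hq0 : (0:ℤ) < q := by exact_mod_cast hq
  have hq' : (q:ℚ) ≠ 0 := by positivity
  -- n is nonnegative
  obtain ⟨k, hk⟩ := hu.2.1
  have hn0 : 0 ≤ n := by
    have : (n:ℚ) = (k:ℚ) := by rw [hn, hk]
    have : n = (k:ℤ) := by exact_mod_cast this
    omega
  set r : ℕ := ((-((p:ℤ) * n)) % q).toNat with hrdef
  have hr : (r:ℤ) = (-((p:ℤ) * n)) % q :=
    Int.toNat_of_nonneg (Int.emod_nonneg _ (ne_of_gt hq0))
  have hrq : r < q := by
    have := Int.emod_lt_of_pos (-((p:ℤ) * n)) hq0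
    omega
  have hdvd : (q:ℤ) ∣ (p:ℤ) * n + r :=
    ⟨-((-((p:ℤ) * n)) / q), by rw [hr, Int.emod_def]; ring⟩
  obtain ⟨m0, hm0⟩ := hdvd
  have hm0' : ((p:ℚ) * n + r) = (q:ℚ) * m0 := by exact_mod_cast hm0
  -- Tmap n = m0
  have hT : Tmap p q n = m0 := by
    unfold Tmap
    rw [Int.ceil_eq_iff]
    constructor
    · rw [lt_div_iff₀ (by positivity : (0:ℚ) < q)]
      have h1 : ((m0:ℚ) - 1) * q = q * m0 - q := by ring
      rw [h1, ← hm0']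
      have : (r:ℚ) < q := by exact_mod_cast hrq
      linarith
    · rw [div_le_iff₀ (by positivity : (0:ℚ) < q)]
      have h1 : (m0:ℚ) * q = q * m0 := by ring
      rw [h1, ← hm0']
      have : (0:ℚ) ≤ r := by positivity
      linarith
  -- value of u ++ [r]
  have hval : ((m0 : ℤ) : ℚ) = ratVal p q (u ++ [r]) := by
    rw [ratVal_append, ← hn]
    show (m0:ℚ) = ((p:ℚ)/q)^(1:ℕ) * n + ratVal p q [r]
    have hrc : ratVal p q [r] = (r:ℚ)/q := by
      rw [ratVal_cons]
      simp [ratVal]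
    rw [hrc, pow_one]
    field_simp
    linarith [hm0']
  refine ⟨r, hrq, ⟨m0, hm0⟩, ⟨?_, ?_, ?_⟩, by rw [hT]; exact hval⟩
  · intro a ha
    rcases List.mem_append.mp ha with h | h
    · exact hu.1 a h
    · simp at h; omega
  · -- m0 is nonnegative
    have hm0nn : 0 ≤ m0 := by
      rw [← hT]
      exact Int.ceil_nonneg (by positivity)
    refine ⟨m0.toNat, ?_⟩
    rw [← hval]
    exact_mod_cast congrArg (Int.cast : ℤ → ℚ) (Int.toNat_of_nonneg hm0nn).symm
  · cases u with
    | nil => exact absurd rfl hne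
    | cons a u' =>
      simpa using hu.2.2

lemma greedy_lemma (p q : ℕ) (hq : 1 ≤ q) (hpq : q < p) :
    ∀ (l : ℕ) (u : List ℕ), InLang p q u → u ≠ [] →
      ∃ g : List ℕ, g.length = l ∧ InLang p q (u ++ g) := by
  intro l
  induction l with
  | zero => intro u hu _; exact ⟨[], rfl, by simpa using hu⟩
  | succ l ih =>
    intro u hu hne
    obtain ⟨k, hk⟩ := hu.2.1
    obtain ⟨r, _, _, hlang, _⟩ :=
      step_lemma p q hq hpq u hu hne (k : ℤ) (by exact_mod_cast hk.symm)
    obtain ⟨g, hglen, hglang⟩ := ih (u ++ [r]) hlang (by simp)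
    exact ⟨r :: g, by simp [hglen], by simpa using hglang⟩

/-- For coprime `p > q ≥ 1` and nonempty `u ∈ L_{p/q}`: for every `l ∈ ℕ`,
`val_{p/q}(u·wmin_{p/q}(u,l)) = T_{p/q}^l(val_{p/q}(u))`, i.e. the minimal numbers with
seed `u` are obtained by iterating `T_{p/q}(x) = ⌈px/q⌉` from `val_{p/q}(u)`. -/
theorem stmt10 (p q : ℕ) (hq : 1 ≤ q) (hpq : q < p) (hco : Nat.Coprime p q)
    (u : List ℕ) (hu : InLang p q u) (hne : u ≠ [])
    (n : ℤ) (hn : (n : ℚ) = ratVal p q u)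
    (l : ℕ) (v : List ℕ) (hv : IsWmin p q u l v) :
    ratVal p q (u ++ v) = (((Tmap p q)^[l] n : ℤ) : ℚ) := by
  induction l generalizing u n v with
  | zero =>
    obtain ⟨hlen, _, _⟩ := hv
    rw [List.length_eq_zero_iff] at hlen
    subst hlen
    rw [List.append_nil, Function.iterate_zero_apply, ← hn]
  | succ l ih =>
    obtain ⟨hlen, hlang, hmin⟩ := hv
    cases v with
    | nil => simp at hlen
    | cons b t =>
      have htlen : t.length = l := by simpa using hlen
      -- the forced digit r
      obtain ⟨r, hrq, hrdvd, hrlang, hrval⟩ := step_lemma p q hq hpq u hu hne n hn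
      -- b is congruent to r mod q and b = r by minimality
      obtain ⟨m, hm⟩ := hlang.2.1
      have hbdvd : (q:ℤ) ∣ (p:ℤ) * n + b :=
        forced_digit p q hq hco u n hn b t (m : ℤ) (by exact_mod_cast hm.symm)
      have hdvd_sub : (q:ℤ) ∣ (b:ℤ) - r := by
        have := dvd_sub hbdvd hrdvd
        simpa using this
      have hbr : b = r := by
        by_contra hne'
        rcases lt_trichotomy b r with h | h | h
        · -- impossible: 0 < r - b < q but q ∣ r - b
          have h1 : (q:ℤ) ∣ (r:ℤ) - b := by
            have := dvd_neg.mpr hdvd_sub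
            rwa [neg_sub] at this
          have := Int.le_of_dvd (by omega) h1
          omega
        · exact hne' h
        · -- r < b: construct a lex-smaller word
          obtain ⟨g, hglen, hglang⟩ := greedy_lemma p q hq hpq l (u ++ [r]) hrlang (by simp)
          have : ¬ List.Lex (· < · : ℕ → ℕ → Prop) (r :: g) (b :: t) :=
            hmin (r :: g) (by simp [hglen]) (by simpa using hglang)
          exact this (List.Lex.rel h)
      subst hbr
      -- t is IsWmin for u ++ [b] of length l
      have hv' : IsWmin p q (u ++ [b]) l t := by
        refine ⟨htlen, by rwa [← List.append_cons], ?_⟩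
        intro t' hlen' hlang' hlex
        exact hmin (b :: t') (by simp [hlen']) (by simpa using hlang')
          (List.Lex.cons hlex)
      have := ih (u ++ [b]) hrlang (by simp) (Tmap p q n) hrval t hv'
      rw [List.append_cons, this, Function.iterate_succ_apply]
end
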